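/- Suppose s_n and t_n (n ≥ 1) are two sequences of real numbers in (e^{1/e}, ∞) such that for some u, c > e^{1/e} and all n: s_n ≤ u⋆n, t_n ≤ u⋆n, s_n ≥ c, and t_n ≥ c. Define S_1 = s_1, S_{n+1} = s_{n+1}^{S_n} and T_1 = t_1, T_{n+1} = t_{n+1}^{T_n}. Then there exists k ∈ ℕ such that for all n > k, S_{n−k} ≤ T_n ≤ S_{n+k}. -/

import Mathlib

/-!
Write `η = e^{1/e}`. Since `η^x ≥ x` for all `x`, every `c > η` satisfies `c^x ≥ (c/η) x` for
`x ≥ 1`, so `c⋆n ≥ (c/η)^n` is unbounded. A tower whose entries satisfy `1 ≤ a_n ≤ u⋆n` is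
then dominated by a shifted tetration `c⋆(n + k)`, with `k` depending only on `u` and `c`:
for `w ≥ u` large, `X_n = w⋆(n+1) · A_n` satisfies `X_{n+1} ≤ w^{2 X_n}`, and as soon as
`4 log w ≤ w log c` the bound `X_n² ≤ c⋆(n+k)` propagates. As `c⋆n ≤ T_n` whenever all
`t_n ≥ c`, both towers are squeezed between `c⋆n` and `c⋆(n+k)`.
-/

/-- Tetration `c ⋆ n`. -/
noncomputable def tet (c : ℝ) : ℕ → ℝ
  | 0 => 1
  | n + 1 => c ^ tet c n

/-- The tower `S n = s n ^ (s (n-1) ^ (⋯ ^ (s 1)))` built from the bottom entry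
`s 1` upward: `S 0 = 1`, `S (n+1) = s (n+1) ^ S n`. -/
noncomputable def towerUp (s : ℕ → ℝ) : ℕ → ℝ
  | 0 => 1
  | n + 1 => s (n + 1) ^ towerUp s n

open Real Filter

@[simp] lemma tet_zero (c : ℝ) : tet c 0 = 1 := rfl

lemma tet_succ (c : ℝ) (n : ℕ) : tet c (n + 1) = c ^ tet c n := rfl

@[simp] lemma towerUp_zero (a : ℕ → ℝ) : towerUp a 0 = 1 := rfl

lemma towerUp_succ (a : ℕ → ℝ) (n : ℕ) : towerUp a (n + 1) = a (n + 1) ^ towerUp a n := rfl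

lemma towerUp_const (c : ℝ) : towerUp (fun _ ↦ c) = tet c := by
  funext n
  induction n with
  | zero => rfl
  | succ n ih => rw [towerUp_succ, tet_succ, ih]

lemma one_le_towerUp {a : ℕ → ℝ} (ha : ∀ n ≥ 1, 1 ≤ a n) (n : ℕ) : 1 ≤ towerUp a n := by
  induction n with
  | zero => simp
  | succ n ih => exact one_le_rpow (ha (n + 1) n.succ_pos) (zero_le_one.trans ih)

lemma one_le_tet {c : ℝ} (hc : 1 ≤ c) (n : ℕ) : 1 ≤ tet c n := by
  simpa only [towerUp_const] using one_le_towerUp (a := fun _ ↦ c) (fun _ _ ↦ hc) n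

lemma tet_one {c : ℝ} : tet c 1 = c := by simp [tet_succ]

lemma tet_monotone {w : ℝ} (hw : 1 ≤ w) : Monotone (tet w) := by
  refine monotone_nat_of_le_succ fun n ↦ ?_
  induction n with
  | zero => simpa [tet_succ] using hw
  | succ n ih => exact rpow_le_rpow_of_exponent_le hw ih

lemma tet_le_towerUp {c : ℝ} {a : ℕ → ℝ} (hc : 1 ≤ c) (ha : ∀ n ≥ 1, c ≤ a n) (n : ℕ) :
    tet c n ≤ towerUp a n := by
  induction n with
  | zero => simp
  | succ n ih =>
    have hc_le : c ≤ a (n + 1) := ha (n + 1) n.succ_pos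
    calc c ^ tet c n ≤ a (n + 1) ^ tet c n :=
          rpow_le_rpow (by linarith) hc_le (by linarith [one_le_tet hc n])
      _ ≤ a (n + 1) ^ towerUp a n := rpow_le_rpow_of_exponent_le (hc.trans hc_le) ih

lemma tet_le_tet {u w : ℝ} (hu : 1 ≤ u) (huw : u ≤ w) (n : ℕ) : tet u n ≤ tet w n := by
  simpa only [towerUp_const] using tet_le_towerUp hu (a := fun _ ↦ w) (fun _ _ ↦ huw) n

lemma le_exp_one_div_exp_one_rpow (x : ℝ) : x ≤ exp (1 / exp 1) ^ x := by
  rw [← exp_mul]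
  calc x = exp 1 * (1 / exp 1 * x) := by field_simp
    _ ≤ exp (1 / exp 1 * x) := exp_one_mul_le_exp

lemma one_lt_exp_one_div_exp_one : 1 < exp (1 / exp 1) :=
  one_lt_exp_iff.mpr (by positivity)

lemma div_mul_le_rpow {c x : ℝ} (hc : exp (1 / exp 1) < c) (hx : 1 ≤ x) :
    c / exp (1 / exp 1) * x ≤ c ^ x := by
  have hη := exp_pos (1 / exp 1)
  have hr : 1 ≤ c / exp (1 / exp 1) := (one_le_div hη).mpr hc.le
  calc c / exp (1 / exp 1) * x
      ≤ (c / exp (1 / exp 1)) ^ x * exp (1 / exp 1) ^ x :=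
        mul_le_mul (self_le_rpow_of_one_le hr hx) (le_exp_one_div_exp_one_rpow x)
          (by linarith) (by positivity)
    _ = c ^ x := by rw [← mul_rpow (by positivity) hη.le, div_mul_cancel₀ _ hη.ne']

lemma div_pow_le_tet {c : ℝ} (hc : exp (1 / exp 1) < c) (n : ℕ) :
    (c / exp (1 / exp 1)) ^ n ≤ tet c n := by
  have hc1 : 1 ≤ c := (one_lt_exp_one_div_exp_one.trans hc).le
  have hr : 0 ≤ c / exp (1 / exp 1) := by positivity
  induction n with
  | zero => simp
  | succ n ih =>
    calc (c / exp (1 / exp 1)) ^ (n + 1) = c / exp (1 / exp 1) * (c / exp (1 / exp 1)) ^ n :=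
          pow_succ' _ _
      _ ≤ c / exp (1 / exp 1) * tet c n := mul_le_mul_of_nonneg_left ih hr
      _ ≤ c ^ tet c n := div_mul_le_rpow hc (one_le_tet hc1 n)

lemma tendsto_tet_atTop {c : ℝ} (hc : exp (1 / exp 1) < c) : Tendsto (tet c) atTop atTop :=
  tendsto_atTop_mono (div_pow_le_tet hc)
    (tendsto_pow_atTop_atTop_of_one_lt ((one_lt_div (exp_pos _)).mpr hc))

section Domination

variable {c w : ℝ} {a : ℕ → ℝ}

lemma tet_mul_towerUp_succ_le (hw : 1 ≤ w) (ha : ∀ n ≥ 1, 1 ≤ a n)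
    (haw : ∀ n ≥ 1, a n ≤ tet w n) (n : ℕ) :
    tet w (n + 2) * towerUp a (n + 1) ≤ w ^ (2 * (tet w (n + 1) * towerUp a n)) := by
  set X := tet w (n + 1) * towerUp a n
  have hA := one_le_towerUp ha n
  have hX : tet w (n + 1) ≤ X := le_mul_of_one_le_right (by linarith [one_le_tet hw (n + 1)]) hA
  have htet : tet w (n + 2) ≤ w ^ X := rpow_le_rpow_of_exponent_le hw hX
  have htower : towerUp a (n + 1) ≤ w ^ X := by
    have ha' : 1 ≤ a (n + 1) := ha (n + 1) n.succ_pos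
    calc a (n + 1) ^ towerUp a n ≤ (w ^ tet w n) ^ towerUp a n :=
          rpow_le_rpow (by linarith) (haw (n + 1) n.succ_pos) (by linarith)
      _ = w ^ (tet w n * towerUp a n) := (rpow_mul (by linarith) _ _).symm
      _ ≤ w ^ X := rpow_le_rpow_of_exponent_le hw
          (mul_le_mul_of_nonneg_right (tet_monotone hw n.le_succ) (by linarith))
  calc tet w (n + 2) * towerUp a (n + 1) ≤ w ^ X * w ^ X :=
        mul_le_mul htet htower (by linarith [one_le_towerUp ha (n + 1)]) (by positivity)
    _ = w ^ (2 * X) := by rw [← rpow_add (by linarith), two_mul]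

lemma rpow_two_mul_sq_le (hw : 1 < w) (hc : 1 < c) (hwc : 4 * log w ≤ w * log c)
    {X Y : ℝ} (hX : w ≤ X) (hXY : X ^ 2 ≤ Y) : (w ^ (2 * X)) ^ 2 ≤ c ^ Y := by
  have hlog : 4 * log w ≤ X * log c :=
    hwc.trans (mul_le_mul_of_nonneg_right hX (log_nonneg hc.le))
  calc (w ^ (2 * X)) ^ 2 = exp (X * (4 * log w)) := by
        rw [← rpow_natCast, ← rpow_mul (by linarith), rpow_def_of_pos (by linarith)]
        push_cast; ring_nf
    _ ≤ exp (X ^ 2 * log c) := by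
        rw [exp_le_exp]; nlinarith [mul_le_mul_of_nonneg_left hlog (by linarith : 0 ≤ X)]
    _ = c ^ (X ^ 2) := by rw [rpow_def_of_pos (by linarith), mul_comm]
    _ ≤ c ^ Y := rpow_le_rpow_of_exponent_le hc.le hXY

lemma sq_tet_mul_towerUp_le {k : ℕ} (hw : 1 < w) (hc : 1 < c) (hwc : 4 * log w ≤ w * log c)
    (hk : w ^ 2 ≤ tet c k) (ha : ∀ n ≥ 1, 1 ≤ a n) (haw : ∀ n ≥ 1, a n ≤ tet w n) (n : ℕ) :
    (tet w (n + 1) * towerUp a n) ^ 2 ≤ tet c (n + k) := by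
  induction n with
  | zero => simpa [tet_one] using hk
  | succ n ih =>
    have hX : w ≤ tet w (n + 1) * towerUp a n := by
      calc w = tet w 1 := tet_one.symm
        _ ≤ tet w (n + 1) := tet_monotone hw.le (by omega)
        _ ≤ _ := le_mul_of_one_le_right (by linarith [one_le_tet hw.le (n + 1)])
            (one_le_towerUp ha n)
    rw [show n + 1 + k = n + k + 1 by omega, tet_succ]
    calc (tet w (n + 2) * towerUp a (n + 1)) ^ 2
        ≤ (w ^ (2 * (tet w (n + 1) * towerUp a n))) ^ 2 :=
          pow_le_pow_left₀ (mul_nonneg (by linarith [one_le_tet hw.le (n + 2)])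
            (by linarith [one_le_towerUp ha (n + 1)]))
            (tet_mul_towerUp_succ_le hw.le ha haw n) 2
      _ ≤ c ^ tet c (n + k) := rpow_two_mul_sq_le hw hc hwc hX ih

end Domination

lemma exists_four_mul_log_le {u c : ℝ} (hc : 1 < c) :
    ∃ w, u ≤ w ∧ 1 < w ∧ 4 * log w ≤ w * log c := by
  have hε : 0 < log c / 4 := by linarith [log_pos hc]
  obtain ⟨w, hw_log, hw_ge⟩ := ((isLittleO_log_id_atTop.bound hε).and
    (eventually_ge_atTop (max u 2))).exists
  refine ⟨w, le_of_max_le_left hw_ge, by linarith [le_of_max_le_right hw_ge], ?_⟩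
  have hw0 : 0 ≤ w := by linarith [le_of_max_le_right hw_ge]
  simp only [norm_eq_abs, id, abs_of_nonneg hw0] at hw_log
  linarith [le_abs_self (log w)]

theorem exists_towerUp_le_tet_add {u c : ℝ} (hu : 1 ≤ u) (hc : exp (1 / exp 1) < c) :
    ∃ k, ∀ a : ℕ → ℝ, (∀ n ≥ 1, 1 ≤ a n) → (∀ n ≥ 1, a n ≤ tet u n) →
      ∀ n, towerUp a n ≤ tet c (n + k) := by
  have hc1 : 1 < c := one_lt_exp_one_div_exp_one.trans hc
  obtain ⟨w, huw, hw, hwc⟩ := exists_four_mul_log_le (u := u) hc1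
  obtain ⟨k, hk⟩ := ((tendsto_tet_atTop hc).eventually_ge_atTop (w ^ 2)).exists
  refine ⟨k, fun a ha hau n ↦ ?_⟩
  have haw : ∀ n ≥ 1, a n ≤ tet w n := fun n hn ↦ (hau n hn).trans (tet_le_tet hu huw n)
  calc towerUp a n ≤ tet w (n + 1) * towerUp a n :=
        le_mul_of_one_le_left (by linarith [one_le_towerUp ha n]) (one_le_tet hw.le _)
    _ ≤ (tet w (n + 1) * towerUp a n) ^ 2 :=
        le_self_pow₀ (one_le_mul_of_one_le_of_one_le (one_le_tet hw.le _) (one_le_towerUp ha n))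
          two_ne_zero
    _ ≤ tet c (n + k) := sq_tet_mul_towerUp_le hw hc1 hwc hk ha haw n

theorem stmt_8_general (s t : ℕ → ℝ) (u c : ℝ)
    (hu : Real.exp (1 / Real.exp 1) < u) (hc : Real.exp (1 / Real.exp 1) < c)
    (hs_ub : ∀ n ≥ 1, s n ≤ tet u n) (ht_ub : ∀ n ≥ 1, t n ≤ tet u n)
    (hs_lb : ∀ n ≥ 1, c ≤ s n) (ht_lb : ∀ n ≥ 1, c ≤ t n) :
    ∃ k : ℕ, ∀ n > k, towerUp s (n - k) ≤ towerUp t n ∧ towerUp t n ≤ towerUp s (n + k) := by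
  have hc1 : 1 ≤ c := (one_lt_exp_one_div_exp_one.trans hc).le
  have hu1 : 1 ≤ u := (one_lt_exp_one_div_exp_one.trans hu).le
  obtain ⟨k, hk⟩ := exists_towerUp_le_tet_add hu1 hc
  refine ⟨k, fun n hn ↦ ⟨?_, ?_⟩⟩
  · calc towerUp s (n - k) ≤ tet c (n - k + k) :=
          hk s (fun m hm ↦ hc1.trans (hs_lb m hm)) hs_ub _
      _ = tet c n := by rw [Nat.sub_add_cancel hn.le]
      _ ≤ towerUp t n := tet_le_towerUp hc1 ht_lb n
  · exact (hk t (fun m hm ↦ hc1.trans (ht_lb m hm)) ht_ub n).trans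
      (tet_le_towerUp hc1 hs_lb (n + k))

theorem stmt_8 (s t : ℕ → ℝ) (u c : ℝ)
    (hu : Real.exp (1 / Real.exp 1) < u) (hc : Real.exp (1 / Real.exp 1) < c)
    (hs_mem : ∀ n ≥ 1, s n ∈ Set.Ioi (Real.exp (1 / Real.exp 1)))
    (ht_mem : ∀ n ≥ 1, t n ∈ Set.Ioi (Real.exp (1 / Real.exp 1)))
    (hs_ub : ∀ n ≥ 1, s n ≤ tet u n) (ht_ub : ∀ n ≥ 1, t n ≤ tet u n)
    (hs_lb : ∀ n ≥ 1, c ≤ s n) (ht_lb : ∀ n ≥ 1, c ≤ t n) :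
    ∃ k : ℕ, ∀ n > k, towerUp s (n - k) ≤ towerUp t n ∧ towerUp t n ≤ towerUp s (n + k) :=
  stmt_8_general s t u c hu hc hs_ub ht_ub hs_lb ht_lb
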